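/- If u is five times continuously differentiable on [a-2h, a+3h] with h > 0, then the explicit six-point midpoint formula satisfies |u(a + h/2) − (1/96)·[u(a-2h) − 9·u(a-h) + 56·u(a) + 56·u(a+h) − 9·u(a+2h) + u(a+3h)]| ≤ (h⁴/384)·sup_{s ∈ [a-2h, a+3h]} |u⁗(s)| + (h⁵/72)·sup_{s ∈ [a-2h, a+3h]} |u⁽⁵⁾(s)|. -/

import Mathlib

/-!
The six-point formula is the cubic Hermite midpoint formula on `[a, a + h]` with the exact slopes
`u'(a)`, `u'(a + h)` replaced by the five-point collocation gradients.

The Hermite formula errs by at most `h⁴/384 · sup |u⁗|`: as a function of the half-width `t`, its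
error on `[m - t, m + t]` has derivative `χ t / 4`, where `χ 0 = 0` and
`|χ' t| = t |u'''(m + t) - u'''(m - t)| ≤ 2 t² sup |u⁗|`, so integrating twice gives the sharp
constant. Each collocation gradient is exact on quartics, so Taylor's theorem with Lagrange
remainder bounds its error by `h⁴/18 · sup |u⁽⁵⁾|`, and this error enters with weight `h/8`.
-/

open Set Topology Nat

section IteratedDerivWithin

variable {𝕜 F : Type*} [NontriviallyNormedField 𝕜] [NormedAddCommGroup F] [NormedSpace 𝕜 F]
  {f : 𝕜 → F} {s t : Set 𝕜} {x : 𝕜}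

theorem iteratedDerivWithin_subset {n : ℕ} (st : s ⊆ t) (hs : UniqueDiffOn 𝕜 s)
    (ht : UniqueDiffOn 𝕜 t) (hf : ContDiffOn 𝕜 n f t) (hx : x ∈ s) :
    iteratedDerivWithin n f s x = iteratedDerivWithin n f t x := by
  simp only [iteratedDerivWithin_eq_iteratedFDerivWithin,
    iteratedFDerivWithin_subset st hs ht hf hx]

theorem ContDiffOn.hasDerivAt_iteratedDerivWithin {m : WithTop ℕ∞} {k : ℕ}
    (hf : ContDiffOn 𝕜 m f s) (hs : UniqueDiffOn 𝕜 s) (hk : k < m) (hx : s ∈ 𝓝 x) :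
    HasDerivAt (iteratedDerivWithin k f s) (iteratedDerivWithin (k + 1) f s x) x := by
  rw [iteratedDerivWithin_succ]
  exact ((hf.differentiableOn_iteratedDerivWithin hk hs) x
    (mem_of_mem_nhds hx)).hasDerivWithinAt.hasDerivAt hx

end IteratedDerivWithin

theorem IsCompact.le_biSup_of_continuousOn {X : Type*} [TopologicalSpace X] {f : X → ℝ}
    {s : Set X} {x : X} (hs : IsCompact s) (hf : ContinuousOn f s) (hx : x ∈ s) :
    f x ≤ ⨆ y ∈ s, f y := by
  refine le_ciSup₂ (f := fun y (_ : y ∈ s) => f y) ?_ x hx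
  obtain ⟨B, hB⟩ := (hs.image_of_continuousOn hf).bddAbove
  refine ⟨B, ?_⟩
  simp only [mem_upperBounds, mem_iUnion, mem_range]
  rintro _ ⟨y, hy, rfl⟩
  exact hB ⟨y, hy, rfl⟩

theorem norm_le_of_norm_deriv_le_pow {E : Type*} [NormedAddCommGroup E] [NormedSpace ℝ E]
    {f f' : ℝ → E} {C T : ℝ} {k : ℕ} (hf : ContinuousOn f (Icc 0 T))
    (hf' : ∀ t ∈ Ico 0 T, HasDerivWithinAt f (f' t) (Ici t) t) (h0 : f 0 = 0)
    (bound : ∀ t ∈ Ico 0 T, ‖f' t‖ ≤ C * t ^ k) :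
    ∀ t ∈ Icc 0 T, ‖f t‖ ≤ C * t ^ (k + 1) / (k + 1) := by
  refine image_norm_le_of_norm_deriv_right_le_deriv_boundary hf hf' (by simp [h0])
    (B := fun t => C * t ^ (k + 1) / (k + 1)) (fun t => ?_) bound
  refine (((hasDerivAt_pow (k + 1) t).const_mul C).div_const ((k : ℝ) + 1)).congr_deriv ?_
  field_simp
  push_cast
  ring

theorem abs_sub_taylorWithinEval_le {f : ℝ → ℝ} {s : Set ℝ} {n : ℕ} {x₀ x M : ℝ}
    (hs : UniqueDiffOn ℝ s) (hs' : s.OrdConnected) (hf : ContDiffOn ℝ (n + 1) f s)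
    (hx₀ : x₀ ∈ s) (hx : x ∈ s) (hM : ∀ y ∈ s, |iteratedDerivWithin (n + 1) f s y| ≤ M) :
    |f x - taylorWithinEval f n s x₀ x| ≤ M * |x - x₀| ^ (n + 1) / (n + 1)! := by
  rcases eq_or_ne x₀ x with rfl | hne
  · simp [taylorWithinEval_self]
  have hsub : uIcc x₀ x ⊆ s := hs'.uIcc_subset hx₀ hx
  have hu : UniqueDiffOn ℝ (uIcc x₀ x) := uniqueDiffOn_uIcc hne
  have hd : DifferentiableOn ℝ (iteratedDerivWithin n f (uIcc x₀ x)) (uIoo x₀ x) :=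
    ((hf.mono hsub).differentiableOn_iteratedDerivWithin (by norm_cast; omega) hu).mono
      Ioo_subset_Icc_self
  obtain ⟨y, hy, hrem⟩ := taylor_mean_remainder_lagrange hne (hf.of_succ.mono hsub) hd
  have htaylor : taylorWithinEval f n (uIcc x₀ x) x₀ x = taylorWithinEval f n s x₀ x := by
    simp only [taylor_within_apply]
    refine Finset.sum_congr rfl fun k hk => ?_
    rw [Finset.mem_range] at hk
    rw [iteratedDerivWithin_subset hsub hu hs (hf.of_le (by norm_cast; omega)) left_mem_uIcc]
  rw [← htaylor, hrem, iteratedDerivWithin_subset hsub hu hs hf (Ioo_subset_Icc_self hy),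
    abs_div, abs_mul, abs_pow, Nat.abs_cast]
  gcongr
  exact hM y (hsub (Ioo_subset_Icc_self hy))

/-- Value at `a + h / 2` of the cubic Hermite interpolant on `[a, a + h]` with values `y₀, y₁`
and slopes `d₀, d₁`. -/
noncomputable def hermiteMidpoint (h y₀ y₁ d₀ d₁ : ℝ) : ℝ := (y₀ + y₁) / 2 + h / 8 * (d₀ - d₁)

theorem abs_mul_deriv_sub_le {g g' g'' : ℝ → ℝ} {C r : ℝ}
    (hg : ∀ t ∈ Icc 0 r, HasDerivAt g (g' t) t) (hg' : ∀ t ∈ Icc 0 r, HasDerivAt g' (g'' t) t)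
    (h0 : g 0 = 0) (hC : ∀ t ∈ Icc 0 r, |g'' t| ≤ C * t) :
    ∀ t ∈ Icc 0 r, |t * g' t - g t| ≤ C * t ^ 3 / 3 := by
  have hderiv : ∀ t ∈ Icc 0 r, HasDerivAt (fun t => t * g' t - g t) (t * g'' t) t :=
    fun t ht => (((hasDerivAt_id' t).mul (hg' t ht)).sub (hg t ht)).congr_deriv (by ring)
  have := norm_le_of_norm_deriv_le_pow (C := C) (k := 2)
    (fun t ht => (hderiv t ht).continuousAt.continuousWithinAt)
    (fun t ht => (hderiv t (Ico_subset_Icc_self ht)).hasDerivWithinAt) (by simp [h0])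
    (fun t ht => by
      rw [Real.norm_eq_abs, abs_mul, abs_of_nonneg ht.1]
      calc t * |g'' t| ≤ t * (C * t) := by gcongr; exacts [ht.1, hC t (Ico_subset_Icc_self ht)]
        _ = C * t ^ 2 := by ring)
  intro t ht
  have hbound := this t ht
  rw [Real.norm_eq_abs] at hbound
  convert hbound using 1
  norm_num

theorem abs_sub_hermiteMidpoint_le {v v₁ v₂ v₃ v₄ : ℝ → ℝ} {m r M : ℝ} (hr : 0 ≤ r)
    (hv : ∀ x ∈ Icc (m - r) (m + r), HasDerivAt v (v₁ x) x)
    (hv₁ : ∀ x ∈ Icc (m - r) (m + r), HasDerivAt v₁ (v₂ x) x)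
    (hv₂ : ∀ x ∈ Icc (m - r) (m + r), HasDerivAt v₂ (v₃ x) x)
    (hv₃ : ∀ x ∈ Icc (m - r) (m + r), HasDerivAt v₃ (v₄ x) x)
    (hM : ∀ x ∈ Icc (m - r) (m + r), |v₄ x| ≤ M) :
    |v m - hermiteMidpoint (2 * r) (v (m - r)) (v (m + r)) (v₁ (m - r)) (v₁ (m + r))|
      ≤ M * r ^ 4 / 24 := by
  have hmem : ∀ t ∈ Icc 0 r, m + t ∈ Icc (m - r) (m + r) ∧ m - t ∈ Icc (m - r) (m + r) := by
    rintro t ⟨ht₀, ht⟩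
    refine ⟨⟨?_, ?_⟩, ⟨?_, ?_⟩⟩ <;> linarith
  have hg : ∀ t ∈ Icc 0 r, HasDerivAt (fun t => v₁ (m + t) - v₁ (m - t))
      (v₂ (m + t) + v₂ (m - t)) t := fun t ht =>
    (((hv₁ _ (hmem t ht).1).comp_const_add m t).sub
      ((hv₁ _ (hmem t ht).2).comp_const_sub m t)).congr_deriv (sub_neg_eq_add _ _)
  have hg' : ∀ t ∈ Icc 0 r, HasDerivAt (fun t => v₂ (m + t) + v₂ (m - t))
      (v₃ (m + t) - v₃ (m - t)) t := fun t ht =>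
    ((hv₂ _ (hmem t ht).1).comp_const_add m t).add
      ((hv₂ _ (hmem t ht).2).comp_const_sub m t)
  have hv₃_lip : ∀ t ∈ Icc 0 r, |v₃ (m + t) - v₃ (m - t)| ≤ 2 * M * t := by
    intro t ht
    have := (convex_Icc (m - r) (m + r)).norm_image_sub_le_of_norm_hasDerivWithin_le
      (fun x hx => (hv₃ x hx).hasDerivWithinAt) hM (hmem t ht).2 (hmem t ht).1
    rw [Real.norm_eq_abs, Real.norm_eq_abs, show m + t - (m - t) = 2 * t by ring,
      abs_of_nonneg (show 0 ≤ 2 * t by linarith [ht.1])] at this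
    linarith
  have hχ := abs_mul_deriv_sub_le hg hg' (by simp) hv₃_lip
  have herr : ∀ t ∈ Icc 0 r, HasDerivAt
      (fun t => v m - hermiteMidpoint (2 * t) (v (m - t)) (v (m + t)) (v₁ (m - t)) (v₁ (m + t)))
      ((t * (v₂ (m + t) + v₂ (m - t)) - (v₁ (m + t) - v₁ (m - t))) / 4) t := by
    intro t ht
    have hp₀ := (hv _ (hmem t ht).1).comp_const_add m t
    have hm₀ := (hv _ (hmem t ht).2).comp_const_sub m t
    have hp₁ := (hv₁ _ (hmem t ht).1).comp_const_add m t
    have hm₁ := (hv₁ _ (hmem t ht).2).comp_const_sub m t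
    exact ((((hm₀.add hp₀).div_const 2).add (((hasDerivAt_id' t).const_mul 2).div_const 8 |>.mul
      (hm₁.sub hp₁))).const_sub (v m)).congr_deriv (by simp only [Pi.sub_apply]; ring)
  have := norm_le_of_norm_deriv_le_pow (C := M / 6) (k := 3)
    (fun t ht => (herr t ht).continuousAt.continuousWithinAt)
    (fun t ht => (herr t (Ico_subset_Icc_self ht)).hasDerivWithinAt)
    (by simp [hermiteMidpoint])
    (fun t ht => by
      rw [Real.norm_eq_abs, abs_div, abs_of_pos (four_pos : (0:ℝ) < 4)]
      linarith [hχ t (Ico_subset_Icc_self ht)])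
    r ⟨hr, le_rfl⟩
  rw [Real.norm_eq_abs] at this
  convert this using 1
  push_cast
  ring

/-- Derivative at `b` of the quartic interpolating `u` at `b - 2h, b - h, b, b + h, b + 2h`. -/
noncomputable def collocationGradient (u : ℝ → ℝ) (b h : ℝ) : ℝ :=
  (8 * u (b + h) - 8 * u (b - h) + u (b - 2 * h) - u (b + 2 * h)) / (12 * h)

theorem abs_iteratedDerivWithin_one_sub_collocationGradient_le {u : ℝ → ℝ} {s : Set ℝ}
    {b h M : ℝ} (hh : 0 < h) (hs : UniqueDiffOn ℝ s) (hs' : s.OrdConnected)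
    (hu : ContDiffOn ℝ 5 u s) (hb₁ : b - 2 * h ∈ s) (hb₂ : b + 2 * h ∈ s)
    (hM : ∀ y ∈ s, |iteratedDerivWithin 5 u s y| ≤ M) :
    |iteratedDerivWithin 1 u s b - collocationGradient u b h| ≤ M * h ^ 4 / 18 := by
  have hmem : ∀ c : ℝ, |c| ≤ 2 → b + c * h ∈ s := fun c hc =>
    hs'.out hb₁ hb₂ ⟨by nlinarith [neg_abs_le c], by nlinarith [le_abs_self c]⟩
  set T : ℝ → ℝ := fun c => taylorWithinEval u 4 s b (b + c * h)
  have hT : 8 * T 1 - 8 * T (-1) + T (-2) - T 2 = 12 * h * iteratedDerivWithin 1 u s b := by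
    simp only [T, taylor_within_apply, Finset.sum_range_succ, Finset.sum_range_zero, smul_eq_mul]
    norm_num [Nat.factorial]
    ring
  set R : ℝ → ℝ := fun c => u (b + c * h) - T c
  have hR : ∀ c : ℝ, |c| ≤ 2 → |R c| ≤ M * |c| ^ 5 * h ^ 5 / 120 := by
    intro c hc
    have hb : b ∈ s := by simpa using hmem 0 (by simp)
    have := abs_sub_taylorWithinEval_le hs hs' hu hb (hmem c hc) hM
    rwa [add_sub_cancel_left, abs_mul, abs_of_pos hh, mul_pow, ← mul_assoc] at this
  have hsplit : iteratedDerivWithin 1 u s b - collocationGradient u b h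
      = -(8 * R 1 - 8 * R (-1) + R (-2) - R 2) / (12 * h) := by
    simp only [R, collocationGradient, one_mul, neg_mul, ← sub_eq_add_neg]
    field_simp
    linear_combination -hT
  have h₁ := abs_le.1 (hR 1 (by norm_num))
  have h₂ := abs_le.1 (hR (-1) (by norm_num))
  have h₃ := abs_le.1 (hR (-2) (by norm_num))
  have h₄ := abs_le.1 (hR 2 (by norm_num))
  norm_num at h₁ h₂ h₃ h₄
  rw [hsplit, abs_div, abs_neg, abs_of_pos (by positivity : 0 < 12 * h),
    div_le_iff₀ (by positivity), abs_le]
  constructor <;> linarith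

theorem sixPoint_eq_hermiteMidpoint (u : ℝ → ℝ) {a h : ℝ} (hh : h ≠ 0) :
    (1 / 96) * (u (a - 2 * h) - 9 * u (a - h) + 56 * u a + 56 * u (a + h)
      - 9 * u (a + 2 * h) + u (a + 3 * h))
      = hermiteMidpoint h (u a) (u (a + h)) (collocationGradient u a h)
          (collocationGradient u (a + h) h) := by
  simp only [hermiteMidpoint, collocationGradient, show a + h + h = a + 2 * h by ring,
    show a + h - h = a by ring, show a + h - 2 * h = a - h by ring,
    show a + h + 2 * h = a + 3 * h by ring]
  field_simp
  ring

theorem abs_sub_hermiteMidpoint_le_add {y h y₀ y₁ d₀ d₁ e₀ e₁ ε δ : ℝ} (hh : 0 ≤ h)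
    (hd : |y - hermiteMidpoint h y₀ y₁ d₀ d₁| ≤ ε) (h₀ : |d₀ - e₀| ≤ δ) (h₁ : |d₁ - e₁| ≤ δ) :
    |y - hermiteMidpoint h y₀ y₁ e₀ e₁| ≤ ε + h / 4 * δ := by
  have hsplit : y - hermiteMidpoint h y₀ y₁ e₀ e₁
      = (y - hermiteMidpoint h y₀ y₁ d₀ d₁) + h / 8 * ((d₀ - e₀) - (d₁ - e₁)) := by
    simp only [hermiteMidpoint]
    ring
  calc |y - hermiteMidpoint h y₀ y₁ e₀ e₁|
      ≤ |y - hermiteMidpoint h y₀ y₁ d₀ d₁| + h / 8 * (|d₀ - e₀| + |d₁ - e₁|) := by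
        rw [hsplit]
        refine (abs_add_le _ _).trans ?_
        rw [abs_mul, abs_of_nonneg (by positivity : 0 ≤ h / 8)]
        gcongr
        exact abs_sub _ _
    _ ≤ ε + h / 8 * (δ + δ) := by gcongr
    _ = ε + h / 4 * δ := by ring

/-- The explicit six-point midpoint formula
(1/96)[u(a−2h) − 9u(a−h) + 56u(a) + 56u(a+h) − 9u(a+2h) + u(a+3h)]
obtained by inserting the collocation-polynomial gradients into the cubic
Hermite midpoint formula is fourth-order accurate. -/
theorem six_point_midpoint_formula
    (u : ℝ → ℝ) (a h : ℝ) (hh : 0 < h)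
    (hu : ContDiffOn ℝ 5 u (Set.Icc (a - 2 * h) (a + 3 * h))) :
    |u (a + h / 2)
        - (1 / 96) * (u (a - 2 * h) - 9 * u (a - h) + 56 * u a + 56 * u (a + h)
            - 9 * u (a + 2 * h) + u (a + 3 * h))|
      ≤ (h ^ 4 / 384) * (⨆ s ∈ Set.Icc (a - 2 * h) (a + 3 * h),
            |iteratedDerivWithin 4 u (Set.Icc (a - 2 * h) (a + 3 * h)) s|)
        + (h ^ 5 / 72) * ⨆ s ∈ Set.Icc (a - 2 * h) (a + 3 * h),
            |iteratedDerivWithin 5 u (Set.Icc (a - 2 * h) (a + 3 * h)) s| := by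
  set I := Icc (a - 2 * h) (a + 3 * h)
  set D : ℕ → ℝ → ℝ := fun k => iteratedDerivWithin k u I
  have hI : UniqueDiffOn ℝ I := uniqueDiffOn_Icc (by linarith)
  have hbound : ∀ k ≤ 5, ∀ x ∈ I, |D k x| ≤ ⨆ y ∈ I, |D k y| := fun k hk x hx =>
    isCompact_Icc.le_biSup_of_continuousOn
      (hu.continuousOn_iteratedDerivWithin (by exact_mod_cast hk) hI).abs hx
  have hderiv : ∀ k < 5, ∀ x ∈ Icc (a + h / 2 - h / 2) (a + h / 2 + h / 2),
      HasDerivAt (D k) (D (k + 1) x) x :=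
    fun k hk x hx => hu.hasDerivAt_iteratedDerivWithin hI (by exact_mod_cast hk)
      (Icc_mem_nhds (by linarith [hx.1]) (by linarith [hx.2]))
  have hHermite := abs_sub_hermiteMidpoint_le (by positivity : 0 ≤ h / 2)
    (by simpa [D] using hderiv 0 (by norm_num)) (hderiv 1 (by norm_num))
    (hderiv 2 (by norm_num)) (hderiv 3 (by norm_num))
    (fun x hx => hbound 4 (by norm_num) x ⟨by linarith [hx.1], by linarith [hx.2]⟩)
  rw [show a + h / 2 - h / 2 = a by ring, show a + h / 2 + h / 2 = a + h by ring,
    show 2 * (h / 2) = h by ring] at hHermite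
  have hgrad : ∀ b, b - 2 * h ∈ I → b + 2 * h ∈ I →
      |D 1 b - collocationGradient u b h| ≤ (⨆ y ∈ I, |D 5 y|) * h ^ 4 / 18 :=
    fun b hb₁ hb₂ => abs_iteratedDerivWithin_one_sub_collocationGradient_le hh hI
      ordConnected_Icc hu hb₁ hb₂ (hbound 5 le_rfl)
  have hga := hgrad a ⟨by linarith, by linarith⟩ ⟨by linarith, by linarith⟩
  have hgb := hgrad (a + h) ⟨by linarith, by linarith⟩ ⟨by linarith, by linarith⟩
  rw [sixPoint_eq_hermiteMidpoint u hh.ne']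
  refine (abs_sub_hermiteMidpoint_le_add hh.le hHermite hga hgb).trans_eq ?_
  simp only [D]
  ring
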